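/- Let $J, I$ be disjoint finite sets of simple roots in a root system $\Phi$ with $\Delta = I \sqcup J$, and fix $\lambda = \sum_{\alpha \in \Phi_I^+} n_\alpha \alpha$ with $n_\alpha \in \mathbb{N}$. Then there are only finitely many $\mu \in \mathbb{N}\text{-span}(\Phi_J^+)$ such that $\lambda + \mu$ is expressible as a nonnegative integral combination of elements of $\Phi^+ \setminus \Phi_J^+$. -/

import Mathlib

open scoped RealInnerProductSpace

/-!
Let `htJ`, `htI` be linear functionals equal to `1` on the simple roots in `J`, resp. in
`I = Δ \ J`, and `0` on the other simple roots; they add up the `J`-, resp. `I`-coefficients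
of a vector. The `J`-heights of the finitely many positive roots are bounded by some `C`,
and every root of `Φ⁺ \ Φ_J⁺` has `I`-height at least `1`, so `htJ ≤ C * htI` on the
`ℕ`-span of `Φ⁺ \ Φ_J⁺`. As `λ` has no `J`-part and `μ` no `I`-part, this gives
`htJ μ ≤ C * htI λ`. Every root of `Φ_J⁺` has `J`-height at least `1`, so only finitely
many `ℕ`-combinations of these finitely many roots have bounded `J`-height.
-/

open AddSubmonoid Submodule

theorem LinearIndepOn.exists_linearMap_eqOn {K V W : Type*} [Field K] [AddCommGroup V]
    [Module K V] [AddCommGroup W] [Module K W] {s : Set V} (hs : LinearIndepOn K id s)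
    (g : V → W) : ∃ f : V →ₗ[K] W, Set.EqOn f g s := by
  let b := Module.Basis.extend hs
  refine ⟨b.constr K fun i => g i, fun x hx => ?_⟩
  have hbx : b ⟨x, hs.subset_extend _ hx⟩ = x := Module.Basis.extend_apply_self hs _
  rw [← hbx, b.constr_basis, hbx]

theorem LinearIndepOn.exists_linearMap_eq_one_eq_zero {K V : Type*} [Field K] [AddCommGroup V]
    [Module K V] {s t : Set V} (hs : LinearIndepOn K id s) (ht : t ⊆ s) :
    ∃ f : V →ₗ[K] K, (∀ x ∈ t, f x = 1) ∧ ∀ x ∈ s \ t, f x = 0 := by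
  obtain ⟨f, hf⟩ := hs.exists_linearMap_eqOn (t.indicator (1 : V → K))
  exact ⟨f, fun x hx => by simp [hf (ht hx), hx], fun x hx => by simp [hf hx.1, hx.2]⟩

section Height

variable {M F : Type*} [AddCommMonoid M] [FunLike F M ℝ] [AddMonoidHomClass F M ℝ]
  {S : Set M}

theorem AddSubmonoid.eq_zero_or_one_le_of_mem_closure (f : F) (hS : ∀ s ∈ S, 1 ≤ f s)
    {x : M} (hx : x ∈ closure S) : x = 0 ∨ 1 ≤ f x := by
  induction hx using closure_induction with
  | mem s hs => exact .inr (hS s hs)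
  | zero => exact .inl rfl
  | add x y _ _ hx hy =>
    rcases hx with rfl | hx
    · simpa using hy
    rcases hy with rfl | hy
    · simpa using Or.inr hx
    · right
      rw [map_add]
      linarith

theorem AddSubmonoid.le_mul_of_mem_closure (f g : F) (C : ℝ) (hS : ∀ s ∈ S, f s ≤ C * g s)
    {x : M} (hx : x ∈ closure S) : f x ≤ C * g x := by
  induction hx using closure_induction with
  | mem s hs => exact hS s hs
  | zero => simp
  | add x y _ _ hx hy =>
    rw [map_add, map_add, mul_add]
    exact add_le_add hx hy

theorem AddSubmonoid.finite_setOf_mem_closure_le (f : F) (hSfin : S.Finite)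
    (hS : ∀ s ∈ S, 1 ≤ f s) (B : ℝ) : {x | x ∈ closure S ∧ f x ≤ B}.Finite := by
  have := hSfin.fintype
  refine (Set.finite_range
    fun a : S → Fin (⌊B⌋₊ + 1) => ∑ s : S, (a s : ℕ) • (s : M)).subset ?_
  rintro x ⟨hx, hfx⟩
  obtain ⟨a, rfl⟩ := mem_closure_iff_of_fintype.1 hx
  have hnonneg (t : S) : 0 ≤ (a t : ℝ) * f t := by
    have := hS t t.2
    positivity
  have hbound (s : S) : (a s : ℝ) ≤ B :=
    calc (a s : ℝ) ≤ a s * f s := le_mul_of_one_le_right (Nat.cast_nonneg _) (hS s s.2)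
      _ ≤ ∑ t, (a t : ℝ) * f t :=
        Finset.single_le_sum (fun t _ => hnonneg t) (Finset.mem_univ s)
      _ = f (∑ t, a t • (t : M)) := by simp [map_sum, map_nsmul]
      _ ≤ B := hfx
  exact ⟨fun s => ⟨a s, Nat.lt_succ_of_le (Nat.le_floor (hbound s))⟩, rfl⟩

end Height

section SimpleRoots

variable {V F : Type*} [AddCommGroup V] [FunLike F V ℝ] [AddMonoidHomClass F V ℝ]

theorem map_eq_zero_of_mem_span_int (f : F) {T : Set V} (hT : ∀ t ∈ T, f t = 0) {x : V}
    (hx : x ∈ span ℤ T) : f x = 0 := by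
  induction hx using Submodule.span_induction with
  | mem t ht => exact hT t ht
  | zero => simp
  | add x y _ _ hx hy => rw [map_add, hx, hy, add_zero]
  | smul n x _ hx => rw [map_zsmul, hx, smul_zero]

theorem AddSubmonoid.mem_span_of_mem_closure_inter {s T : Set V} {x : V}
    (hx : x ∈ closure (s ∩ span ℤ T)) : x ∈ span ℤ T :=
  closure_le (S := (span ℤ T).toAddSubmonoid) |>.2 (fun _ hy => hy.2) hx

theorem AddSubmonoid.mem_closure_or_one_le_of_mem_closure {Δ J : Set V} (hJ : J ⊆ Δ) (f : F)
    (hf₀ : ∀ d ∈ J, f d = 0) (hf₁ : ∀ d ∈ Δ \ J, f d = 1) {x : V}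
    (hx : x ∈ closure Δ) : x ∈ closure J ∨ 1 ≤ f x := by
  rw [← Set.union_sdiff_cancel hJ, AddSubmonoid.closure_union, AddSubmonoid.mem_sup] at hx
  obtain ⟨a, ha, b, hb, rfl⟩ := hx
  rcases eq_zero_or_one_le_of_mem_closure f (fun d hd => (hf₁ d hd).ge) hb with rfl | hb
  · simpa using Or.inl ha
  · right
    rwa [map_add, map_eq_zero_of_mem_span_int f hf₀ (closure_subset_span ha), zero_add]

theorem AddSubmonoid.mem_closure_of_mem_span_int {Δ J : Set V} (hJ : J ⊆ Δ) (f : F)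
    (hf₀ : ∀ d ∈ J, f d = 0) (hf₁ : ∀ d ∈ Δ \ J, f d = 1) {x : V}
    (hx : x ∈ closure Δ) (hxJ : x ∈ span ℤ J) : x ∈ closure J :=
  (mem_closure_or_one_le_of_mem_closure hJ f hf₀ hf₁ hx).resolve_right
    (by simp [map_eq_zero_of_mem_span_int f hf₀ hxJ])

theorem AddSubmonoid.one_le_of_notMem_span_int {Δ J : Set V} (hJ : J ⊆ Δ) (f : F)
    (hf₀ : ∀ d ∈ J, f d = 0) (hf₁ : ∀ d ∈ Δ \ J, f d = 1) {x : V}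
    (hx : x ∈ closure Δ) (hxJ : x ∉ span ℤ J) : 1 ≤ f x :=
  (mem_closure_or_one_le_of_mem_closure hJ f hf₀ hf₁ hx).resolve_left
    fun h => hxJ (closure_subset_span h)

end SimpleRoots

theorem stmt16_general {V : Type*} [NormedAddCommGroup V] [InnerProductSpace ℝ V]
    (Φ Δ J : Set V) (hJ : J ⊆ Δ)
    (hfin : Φ.Finite) (h0 : (0 : V) ∉ Φ)
    (hli : LinearIndependent ℝ ((↑) : Δ → V))
    (pos : Set V)
    (hpos : pos = Φ ∩ (AddSubmonoid.closure Δ : Set V))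
    (lam : V)
    (hlam : lam ∈ AddSubmonoid.closure (pos ∩ (Submodule.span ℤ (Δ \ J) : Set V))) :
    {μ : V | μ ∈ AddSubmonoid.closure (pos ∩ (Submodule.span ℤ J : Set V)) ∧
      lam + μ ∈ AddSubmonoid.closure
        (pos \ (pos ∩ (Submodule.span ℤ J : Set V)))}.Finite := by
  have hposΦ : pos ⊆ Φ := hpos ▸ Set.inter_subset_left
  have hposΔ : pos ⊆ AddSubmonoid.closure Δ := hpos ▸ Set.inter_subset_right
  have hposfin : pos.Finite := hfin.subset hposΦ
  obtain ⟨htJ, htJ₁, htJ₀⟩ := LinearIndepOn.exists_linearMap_eq_one_eq_zero hli hJ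
  obtain ⟨htI, htI₁, htI₀⟩ :=
    LinearIndepOn.exists_linearMap_eq_one_eq_zero hli (Set.sdiff_subset (t := J))
  replace htI₀ : ∀ d ∈ J, htI d = 0 := fun d hd => htI₀ d ⟨hJ hd, fun h => h.2 hd⟩
  have htJ_pos : ∀ γ ∈ pos ∩ span ℤ J, 1 ≤ htJ γ := fun γ hγ =>
    (eq_zero_or_one_le_of_mem_closure htJ (fun d hd => (htJ₁ d hd).ge)
      (mem_closure_of_mem_span_int hJ htI htI₀ htI₁ (hposΔ hγ.1) hγ.2)).resolve_left
      (ne_of_mem_of_not_mem (hposΦ hγ.1) h0)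
  have htI_pos : ∀ γ ∈ pos \ (pos ∩ span ℤ J), 1 ≤ htI γ := fun γ hγ =>
    one_le_of_notMem_span_int hJ htI htI₀ htI₁ (hposΔ hγ.1) fun h => hγ.2 ⟨hγ.1, h⟩
  obtain ⟨C, hC⟩ := ((hposfin.image htJ).insert 0).bddAbove
  have hJ_le_I : ∀ γ ∈ pos \ (pos ∩ span ℤ J), htJ γ ≤ C * htI γ := fun γ hγ =>
    (hC (Set.mem_insert_of_mem _ ⟨γ, hγ.1, rfl⟩)).trans
      (le_mul_of_one_le_right (hC (Set.mem_insert _ _)) (htI_pos γ hγ))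
  refine (finite_setOf_mem_closure_le htJ (hposfin.subset Set.inter_subset_left) htJ_pos
    (C * htI lam)).subset fun μ ⟨hμ, hlamμ⟩ => ⟨hμ, ?_⟩
  simpa [map_eq_zero_of_mem_span_int htJ htJ₀ (mem_span_of_mem_closure_inter hlam),
    map_eq_zero_of_mem_span_int htI htI₀ (mem_span_of_mem_closure_inter hμ)]
    using le_mul_of_mem_closure htJ htI C hJ_le_I hlamμ

/-- In a root system with base `Δ = I ⊔ J` and positive roots `pos`, for a fixed
`λ` in the `ℕ`-span of `Φ_I⁺` there are only finitely many `μ` in the `ℕ`-span of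
`Φ_J⁺` such that `λ + μ` is a nonnegative integral combination of elements of
`Φ⁺ \ Φ_J⁺`. -/
theorem stmt16 {V : Type*} [NormedAddCommGroup V] [InnerProductSpace ℝ V]
    (Φ Δ J : Set V) (hJ : J ⊆ Δ) (hΔΦ : Δ ⊆ Φ)
    (hfin : Φ.Finite) (h0 : (0 : V) ∉ Φ)
    (hspan : Submodule.span ℝ Φ = ⊤)
    (hli : LinearIndependent ℝ ((↑) : Δ → V))
    (hcrys : ∀ α ∈ Φ, ∀ β ∈ Φ, ∃ n : ℤ, 2 * ⟪β, α⟫ / ⟪α, α⟫ = (n : ℝ))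
    (hrefl : ∀ α ∈ Φ, ∀ β ∈ Φ, β - (2 * ⟪β, α⟫ / ⟪α, α⟫) • α ∈ Φ)
    (pos : Set V)
    (hpos : pos = Φ ∩ (AddSubmonoid.closure Δ : Set V))
    (hsign : Φ = pos ∪ (-pos))
    (lam : V)
    (hlam : lam ∈ AddSubmonoid.closure (pos ∩ (Submodule.span ℤ (Δ \ J) : Set V))) :
    {μ : V | μ ∈ AddSubmonoid.closure (pos ∩ (Submodule.span ℤ J : Set V)) ∧
      lam + μ ∈ AddSubmonoid.closure
        (pos \ (pos ∩ (Submodule.span ℤ J : Set V)))}.Finite :=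
  stmt16_general Φ Δ J hJ hfin h0 hli pos hpos lam hlam
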